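/- (Identity (F8) in the proof of Theorem 2) The vectors x and y satisfy λ³x = λ²Bx − λ(ΔB₂)x + (D_Δ)x − y. -/

import Mathlib

open Matrix ENNReal

namespace PercNB

variable {V : Type*} [Fintype V] [DecidableEq V]

/-- `p : Fin (g+1) → V` is a length-`g` directed path in the simple graph `G`:
`g+1` pairwise distinct vertices with consecutive vertices adjacent. -/
def IsDiPath (G : SimpleGraph V) (g : ℕ) (p : Fin (g+1) → V) : Prop :=
  Function.Injective p ∧ ∀ k : Fin g, G.Adj (p k.castSucc) (p k.succ)

instance (G : SimpleGraph V) [DecidableRel G.Adj] (g : ℕ) :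
    DecidablePred (IsDiPath G g) := fun p =>
  inferInstanceAs (Decidable (Function.Injective p ∧ ∀ k : Fin g, G.Adj (p k.castSucc) (p k.succ)))

/-- The type of length-`g` directed paths of `G`. -/
abbrev DiPath (G : SimpleGraph V) (g : ℕ) := {p : Fin (g+1) → V // IsDiPath G g p}

/-- The `g`-th-order non-backtracking matrix `B^(g)` of `G`, indexed by the length-`g`
directed paths of `G`: the `(p, q)` entry is `1` if `q k = p (k+1)` for `1 ≤ k ≤ g` and
`(p 1, …, p (g+1), q (g+1))` is a length-`(g+1)` directed path, and `0` otherwise. -/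
def NBM (G : SimpleGraph V) [DecidableRel G.Adj] (g : ℕ) :
    Matrix (DiPath G g) (DiPath G g) ℂ := fun p q =>
  if (∀ k : Fin g, q.1 k.castSucc = p.1 k.succ) ∧
      IsDiPath G (g+1) (Fin.snoc p.1 (q.1 (Fin.last g))) then 1 else 0

/-- The spectral radius of a finite square complex matrix:
the maximum modulus of its eigenvalues (`0` if the index type is empty). -/
noncomputable def specRad {n : Type*} [Fintype n] [DecidableEq n] (X : Matrix n n ℂ) : ℝ≥0∞ :=
  spectralRadius ℂ X

/-- `c : Fin k → V` is a simple cycle of length `k ≥ 3` in `G`: pairwise distinct vertices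
with `c t` adjacent to `c (t+1)` for `1 ≤ t ≤ k-1` and `c k` adjacent to `c 1`. -/
def IsSimpleCycle (G : SimpleGraph V) (k : ℕ) (c : Fin k → V) : Prop :=
  3 ≤ k ∧ Function.Injective c ∧
    ∀ t : Fin k, G.Adj (c t) (c ⟨(t.val + 1) % k, Nat.mod_lt _ t.pos⟩)

/-- The arc relation of the digraph `G^(g)` on the length-`g` directed paths of `G`:
`p → q` exactly when `B^(g)_{p,q} = 1`. -/
def NBArc (G : SimpleGraph V) (g : ℕ) (p q : DiPath G g) : Prop :=
  (∀ k : Fin g, q.1 k.castSucc = p.1 k.succ) ∧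
    IsDiPath G (g+1) (Fin.snoc p.1 (q.1 (Fin.last g)))

/-- The arc relation of the line digraph `L(G^(g-1))` (for `g ≥ 1`), under the identification
of its vertices — the arcs `(i₁,…,i_g) → (i₂,…,i_{g+1})` of `G^(g-1)` — with the length-`g`
directed paths `(i₁,…,i_{g+1})` of `G`: there is an arc `p → q` exactly when the arc
corresponding to `p` ends at the tail of the arc corresponding to `q`, i.e. when
`q k = p (k+1)` for `1 ≤ k ≤ g`. -/
def LineArc (G : SimpleGraph V) (g : ℕ) (p q : DiPath G g) : Prop :=
  ∀ k : Fin g, q.1 k.castSucc = p.1 k.succ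

/-- `c : Fin k → α` is a directed cycle of length `k` with respect to the arc relation `r`:
`k` pairwise distinct vertices with an arc from each to the cyclically next one. -/
def IsDiCycle {α : Type*} (r : α → α → Prop) (k : ℕ) (c : Fin k → α) : Prop :=
  Function.Injective c ∧ ∀ t : Fin k, r (c t) (c ⟨(t.val + 1) % k, Nat.mod_lt _ t.pos⟩)

/-- The type of directed edges of `G`: ordered pairs of adjacent vertices. -/
abbrev DiEdge (G : SimpleGraph V) := {e : V × V // G.Adj e.1 e.2}

/-- The standard non-backtracking matrix `B = B^(1)`, indexed by directed edges:
`B_{(i,j),(k,l)} = 1` iff `j = k`, `l ≠ i` and `j` is adjacent to `l`. -/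
def Bmat (G : SimpleGraph V) [DecidableRel G.Adj] : Matrix (DiEdge G) (DiEdge G) ℂ :=
  fun e f => if e.1.2 = f.1.1 ∧ f.1.2 ≠ e.1.1 ∧ G.Adj e.1.2 f.1.2 then 1 else 0

/-- `(ΔB₁)_{(i,j),(k,l)} = 1` iff `B_{(i,j),(k,l)} = 1` and `i` is adjacent to `l`. -/
def dB1 (G : SimpleGraph V) [DecidableRel G.Adj] : Matrix (DiEdge G) (DiEdge G) ℂ :=
  fun e f => if (e.1.2 = f.1.1 ∧ f.1.2 ≠ e.1.1 ∧ G.Adj e.1.2 f.1.2) ∧ G.Adj e.1.1 f.1.2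
    then 1 else 0

/-- `(ΔB₂)_{(i,j),(k,l)} = 1` iff `l = i` and `j` is adjacent to `k`. -/
def dB2 (G : SimpleGraph V) [DecidableRel G.Adj] : Matrix (DiEdge G) (DiEdge G) ℂ :=
  fun e f => if f.1.2 = e.1.1 ∧ G.Adj e.1.2 f.1.1 then 1 else 0

/-- The diagonal matrix `D_Δ` whose `((i,j),(i,j))` entry is the number of common
neighbours of `i` and `j`. -/
noncomputable def Ddel (G : SimpleGraph V) [DecidableRel G.Adj] :
    Matrix (DiEdge G) (DiEdge G) ℂ :=
  Matrix.diagonal fun e =>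
    ((Finset.univ.filter fun v => G.Adj e.1.1 v ∧ G.Adj e.1.2 v).card : ℂ)

/-- The `8E × 8E` block matrix
`M = [[B, −ΔB₂, D_Δ − I, B − ΔB₁], [I, 0, 0, 0], [0, I, 0, 0], [0, 0, I, 0]]`. -/
noncomputable def Mmat (G : SimpleGraph V) [DecidableRel G.Adj] :
    Matrix ((DiEdge G ⊕ DiEdge G) ⊕ (DiEdge G ⊕ DiEdge G))
      ((DiEdge G ⊕ DiEdge G) ⊕ (DiEdge G ⊕ DiEdge G)) ℂ :=
  Matrix.fromBlocks
    (Matrix.fromBlocks (Bmat G) (-(dB2 G)) 1 0)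
    (Matrix.fromBlocks (Ddel G - 1) (Bmat G - dB1 G) 0 0)
    (Matrix.fromBlocks 0 1 0 0)
    (Matrix.fromBlocks 0 0 1 0)

/-- `x_{(i,j)} = Σ_k ψ_{(i,j,k)}`, the sum over all vertices `k` adjacent to `j` with
`k ≠ i`; equivalently, the sum of `ψ` over all length-2 directed paths starting `(i,j,·)`. -/
noncomputable def xvec (G : SimpleGraph V) [DecidableRel G.Adj] (ψ : DiPath G 2 → ℂ) :
    DiEdge G → ℂ := fun e =>
  ∑ p ∈ Finset.univ.filter (fun p : DiPath G 2 => p.1 0 = e.1.1 ∧ p.1 1 = e.1.2), ψ p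

/-- `y_{(i,j)} = Σ_k ψ_{(i,j,k)}`, the sum over all vertices `k` adjacent to both `i`
and `j`. -/
noncomputable def yvec (G : SimpleGraph V) [DecidableRel G.Adj] (ψ : DiPath G 2 → ℂ) :
    DiEdge G → ℂ := fun e =>
  ∑ p ∈ Finset.univ.filter
    (fun p : DiPath G 2 => p.1 0 = e.1.1 ∧ p.1 1 = e.1.2 ∧ G.Adj e.1.1 (p.1 2)), ψ p

/-- The block vector `z = (x, λ⁻¹x, λ⁻²x, λ⁻³x)`. -/
noncomputable def blockVec {G : SimpleGraph V} (lam : ℂ) (x : DiEdge G → ℂ) :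
    (DiEdge G ⊕ DiEdge G) ⊕ (DiEdge G ⊕ DiEdge G) → ℂ :=
  Sum.elim (Sum.elim x (lam⁻¹ • x)) (Sum.elim ((lam ^ 2)⁻¹ • x) ((lam ^ 3)⁻¹ • x))

/-- The vector `ψ` built from `x`:
`ψ_{(i,j,k)} = (λ²x_{(j,k)} − λx_{(k,i)} + x_{(i,j)})/(λ³+1)` if `i` and `k` are adjacent,
and `ψ_{(i,j,k)} = λ⁻¹ x_{(j,k)}` if `i` and `k` are not adjacent. -/
noncomputable def psiOf (G : SimpleGraph V) [DecidableRel G.Adj] (lam : ℂ)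
    (x : DiEdge G → ℂ) : DiPath G 2 → ℂ := fun p =>
  if h : G.Adj (p.1 0) (p.1 2) then
    (lam ^ 2 * x ⟨(p.1 1, p.1 2), by simpa using p.2.2 1⟩
      - lam * x ⟨(p.1 2, p.1 0), h.symm⟩
      + x ⟨(p.1 0, p.1 1), by simpa using p.2.2 0⟩) / (lam ^ 3 + 1)
  else lam⁻¹ * x ⟨(p.1 1, p.1 2), by simpa using p.2.2 1⟩

end PercNB

/-!
Extend `ψ` and `x` by zero to all triples and pairs of vertices. The eigenvalue equation at a
2-path `(i,j,k)` then reads `λ ψ(i,j,k) = x(j,k) − ψ(j,k,i)`: the successors of `(i,j,k)` are the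
paths `(j,k,l)` with `l ≠ i`, and the missing term `ψ(j,k,i)` vanishes unless `k ~ i`.
When `i ~ k`, applying it three times around the triangle `i, j, k` returns to `ψ(i,j,k)`:
`λ³ψ(i,j,k) = λ²x(j,k) − λx(k,i) + x(i,j) − ψ(i,j,k)`; otherwise `λ³ψ(i,j,k) = λ²x(j,k)`.
Summing over `k`, the four groups of terms are exactly the entries of `Bx`, `ΔB₂x`, `D_Δx` and `y`.
-/

namespace PercNB

open Finset

variable {V : Type*}

section

variable {G : SimpleGraph V}

theorem isDiPath_snoc_iff {g : ℕ} {p : Fin (g + 1) → V} {v : V} :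
    IsDiPath G (g + 1) (Fin.snoc p v) ↔
      IsDiPath G g p ∧ v ∉ Set.range p ∧ G.Adj (p (Fin.last g)) v := by
  simp only [IsDiPath, Fin.snoc_injective_iff, Fin.forall_fin_succ', Fin.succ_castSucc,
    Fin.snoc_castSucc, Fin.succ_last, Fin.snoc_last]
  tauto

theorem isDiPath_two_iff {i j k : V} :
    IsDiPath G 2 ![i, j, k] ↔ G.Adj i j ∧ G.Adj j k ∧ i ≠ k := by
  constructor
  · rintro ⟨hinj, hadj⟩
    exact ⟨by simpa using hadj 0, by simpa using hadj 1,
      fun h => by simpa using hinj (a₁ := 0) (a₂ := 2) (by simpa using h)⟩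
  · rintro ⟨hij, hjk, hik⟩
    refine ⟨fun a b hab => ?_, fun t => ?_⟩
    · fin_cases a <;> fin_cases b <;> simp_all [hij.ne, hjk.ne, hij.ne', hjk.ne', Ne.symm hik]
    · fin_cases t <;> simpa

theorem DiPath.eq_vec (p : DiPath G 2) : p.1 = ![p.1 0, p.1 1, p.1 2] := by
  funext t
  fin_cases t <;> rfl

theorem DiPath.isDiPath_vec (p : DiPath G 2) : IsDiPath G 2 ![p.1 0, p.1 1, p.1 2] :=
  p.eq_vec ▸ p.2

theorem nbArc_two_iff (p q : DiPath G 2) :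
    NBArc G 2 p q ↔ q.1 0 = p.1 1 ∧ q.1 1 = p.1 2 ∧ q.1 2 ≠ p.1 0 := by
  obtain ⟨-, hq₁₂, hq₀₂⟩ := isDiPath_two_iff.mp q.isDiPath_vec
  have := hq₁₂.ne
  simp only [NBArc, isDiPath_snoc_iff, p.2, Set.mem_range, Fin.exists_fin_succ, Fin.forall_fin_two]
  grind

variable [DecidableRel G.Adj]

def extendEdge (x : DiEdge G → ℂ) (u v : V) : ℂ :=
  if h : G.Adj u v then x ⟨(u, v), h⟩ else 0

theorem extendEdge_val (x : DiEdge G → ℂ) (e : DiEdge G) : extendEdge x e.1.1 e.1.2 = x e :=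
  dif_pos e.2

theorem extendEdge_of_not_adj (x : DiEdge G → ℂ) {u v : V} (h : ¬G.Adj u v) :
    extendEdge x u v = 0 :=
  dif_neg h

section

variable [Fintype V]

theorem sum_diEdge (w : V → V → ℂ) (x : DiEdge G → ℂ) :
    ∑ e : DiEdge G, w e.1.1 e.1.2 * x e = ∑ u, ∑ v, w u v * extendEdge x u v := by
  let f : V × V → ℂ := fun a => w a.1 a.2 * extendEdge x a.1 a.2
  calc ∑ e : DiEdge G, w e.1.1 e.1.2 * x e = ∑ e : DiEdge G, f e.1 := by
        simp only [f, extendEdge_val]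
    _ = ∑ a ∈ univ.filter fun a : V × V => G.Adj a.1 a.2, f a := (sum_subtype _ (by simp) f).symm
    _ = ∑ a, f a := sum_filter_of_ne fun a _ ha => by_contra fun h => ha (by
          simp only [f, extendEdge_of_not_adj x h, mul_zero])
    _ = ∑ u, ∑ v, w u v * extendEdge x u v := Fintype.sum_prod_type _

end

variable [DecidableEq V]

def extendPath (ψ : DiPath G 2 → ℂ) (p : Fin 3 → V) : ℂ :=
  if h : IsDiPath G 2 p then ψ ⟨p, h⟩ else 0

theorem extendPath_val (ψ : DiPath G 2 → ℂ) (p : DiPath G 2) : extendPath ψ p.1 = ψ p :=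
  dif_pos p.2

theorem extendPath_of_not_isDiPath (ψ : DiPath G 2 → ℂ) {p : Fin 3 → V}
    (h : ¬IsDiPath G 2 p) : extendPath ψ p = 0 :=
  dif_neg h

theorem nbm_two_apply (p q : DiPath G 2) :
    NBM G 2 p q = if q.1 0 = p.1 1 ∧ q.1 1 = p.1 2 ∧ q.1 2 ≠ p.1 0 then 1 else 0 :=
  if_congr (nbArc_two_iff p q) rfl rfl

variable [Fintype V]

theorem sum_diPath_start (ψ : DiPath G 2 → ℂ) (c : V → ℂ) (i j : V) :
    ∑ p ∈ univ.filter (fun p : DiPath G 2 => p.1 0 = i ∧ p.1 1 = j), c (p.1 2) * ψ p =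
      ∑ k, c k * extendPath ψ ![i, j, k] := by
  have hvec : ∀ p ∈ univ.filter (fun p : DiPath G 2 => p.1 0 = i ∧ p.1 1 = j),
      p.1 = ![i, j, p.1 2] := by
    intro p hp
    obtain ⟨h0, h1⟩ := (mem_filter.mp hp).2
    exact h0 ▸ h1 ▸ p.eq_vec
  rw [← sum_filter_of_ne (p := fun k => IsDiPath G 2 ![i, j, k]) fun k _ hk =>
    by_contra fun h => hk (by rw [extendPath_of_not_isDiPath ψ h, mul_zero])]
  refine sum_bij' (fun p _ => p.1 2) (fun k hk => ⟨![i, j, k], (mem_filter.mp hk).2⟩)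
    (fun p hp => ?_) (fun k _ => by simp) (fun p hp => Subtype.ext (hvec p hp).symm)
    (fun k _ => rfl) (fun p hp => ?_)
  · simpa [← hvec p hp] using p.2
  · rw [← extendPath_val ψ p]
    exact congrArg (fun v => c (p.1 2) * extendPath ψ v) (hvec p hp)

theorem xvec_apply (ψ : DiPath G 2 → ℂ) {i j : V} (h : G.Adj i j) :
    xvec G ψ ⟨(i, j), h⟩ = ∑ k, extendPath ψ ![i, j, k] := by
  simp only [xvec]
  simpa only [Pi.one_apply, one_mul] using sum_diPath_start ψ 1 i j

theorem yvec_apply (ψ : DiPath G 2 → ℂ) {i j : V} (h : G.Adj i j) :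
    yvec G ψ ⟨(i, j), h⟩ = ∑ k, if G.Adj i k then extendPath ψ ![i, j, k] else 0 := by
  have := sum_diPath_start ψ (fun k => if G.Adj i k then 1 else 0) i j
  simp only [ite_mul, one_mul, zero_mul] at this
  rw [← this, ← sum_filter, filter_filter]
  simp only [yvec, and_assoc]

theorem nbm_two_mulVec_apply (ψ : DiPath G 2 → ℂ) {i j k : V} (h : IsDiPath G 2 ![i, j, k]) :
    (NBM G 2 *ᵥ ψ) ⟨![i, j, k], h⟩ = extendEdge (xvec G ψ) j k - extendPath ψ ![j, k, i] := by
  have hjk := (isDiPath_two_iff.mp h).2.1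
  have hrow : (NBM G 2 *ᵥ ψ) ⟨![i, j, k], h⟩ =
      ∑ q ∈ univ.filter (fun q : DiPath G 2 => q.1 0 = j ∧ q.1 1 = k),
        (1 - if q.1 2 = i then 1 else 0) * ψ q := by
    rw [sum_filter]
    refine sum_congr rfl fun q _ => ?_
    dsimp only
    rw [nbm_two_apply]
    by_cases hq : q.1 2 = i <;> simp [hq]
  rw [hrow, sum_diPath_start ψ (fun l => 1 - if l = i then 1 else 0), extendEdge, dif_pos hjk,
    xvec_apply]
  simp [sub_mul, sum_sub_distrib]

theorem bmat_mulVec_apply (x : DiEdge G → ℂ) {i j : V} (h : G.Adj i j) :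
    (Bmat G *ᵥ x) ⟨(i, j), h⟩ = ∑ k, if k ≠ i then extendEdge x j k else 0 := by
  refine (sum_diEdge (fun u v => if j = u ∧ v ≠ i ∧ G.Adj j v then 1 else 0) x).trans ?_
  simp only [ite_and, ite_mul, one_mul, zero_mul, sum_ite_irrel, sum_const_zero, sum_ite_eq,
    mem_univ, if_true]
  refine sum_congr rfl fun k _ => ?_
  by_cases hjk : G.Adj j k <;> simp [hjk, extendEdge_of_not_adj]

theorem dB2_mulVec_apply (x : DiEdge G → ℂ) {i j : V} (h : G.Adj i j) :
    (dB2 G *ᵥ x) ⟨(i, j), h⟩ = ∑ k, if G.Adj j k then extendEdge x k i else 0 := by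
  refine (sum_diEdge (fun u v => if v = i ∧ G.Adj j u then 1 else 0) x).trans ?_
  simp only [ite_and, ite_mul, one_mul, zero_mul, sum_ite_eq', mem_univ, if_true]

theorem ddel_mulVec_apply (x : DiEdge G → ℂ) {i j : V} (h : G.Adj i j) :
    (Ddel G *ᵥ x) ⟨(i, j), h⟩ =
      ∑ k, if G.Adj i k ∧ G.Adj j k then extendEdge x i j else 0 := by
  rw [Ddel, mulVec_diagonal, natCast_card_filter, sum_mul, ← extendEdge_val x]
  simp only [ite_mul, one_mul, zero_mul]

variable {lam : ℂ} {ψ : DiPath G 2 → ℂ}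

theorem extendPath_eigen (hψ : NBM G 2 *ᵥ ψ = lam • ψ) {i j k : V}
    (h : IsDiPath G 2 ![i, j, k]) :
    lam * extendPath ψ ![i, j, k] = extendEdge (xvec G ψ) j k - extendPath ψ ![j, k, i] := by
  rw [← nbm_two_mulVec_apply ψ h, hψ, Pi.smul_apply, smul_eq_mul, ← extendPath_val ψ ⟨_, h⟩]

theorem extendPath_eigen_cube (hψ : NBM G 2 *ᵥ ψ = lam • ψ) {i j k : V}
    (h : IsDiPath G 2 ![i, j, k]) :
    lam ^ 3 * extendPath ψ ![i, j, k] =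
      lam ^ 2 * extendEdge (xvec G ψ) j k -
        if G.Adj i k then
          lam * extendEdge (xvec G ψ) k i - extendEdge (xvec G ψ) i j + extendPath ψ ![i, j, k]
        else 0 := by
  obtain ⟨hij, hjk, hne⟩ := isDiPath_two_iff.mp h
  have e₁ := extendPath_eigen hψ h
  by_cases hik : G.Adj i k
  · have e₂ := extendPath_eigen hψ (isDiPath_two_iff.mpr ⟨hjk, hik.symm, hij.ne'⟩)
    have e₃ := extendPath_eigen hψ (isDiPath_two_iff.mpr ⟨hik.symm, hij, hjk.ne'⟩)
    rw [if_pos hik]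
    linear_combination lam ^ 2 * e₁ - lam * e₂ + e₃
  · rw [extendPath_of_not_isDiPath ψ fun h' => hik (isDiPath_two_iff.mp h').2.1.symm,
      sub_zero] at e₁
    rw [if_neg hik]
    linear_combination lam ^ 2 * e₁

theorem identity_F8_summand (hψ : NBM G 2 *ᵥ ψ = lam • ψ) {i j : V}
    (hij : G.Adj i j) (k : V) :
    lam ^ 3 * extendPath ψ ![i, j, k] =
      lam ^ 2 * (if k ≠ i then extendEdge (xvec G ψ) j k else 0)
        - lam * (if G.Adj j k then extendEdge (xvec G ψ) k i else 0)
        + (if G.Adj i k ∧ G.Adj j k then extendEdge (xvec G ψ) i j else 0)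
        - (if G.Adj i k then extendPath ψ ![i, j, k] else 0) := by
  by_cases h : IsDiPath G 2 ![i, j, k]
  · obtain ⟨-, hjk, hik⟩ := isDiPath_two_iff.mp h
    rw [extendPath_eigen_cube hψ h, if_pos (Ne.symm hik), if_pos hjk]
    by_cases hik : G.Adj i k
    · simp only [hik, hjk, and_self, if_true]
      ring
    · simp only [hik, false_and, if_false,
        extendEdge_of_not_adj _ fun hki : G.Adj k i => hik hki.symm]
      ring
  · have hψ0 := extendPath_of_not_isDiPath ψ h
    by_cases hjk : G.Adj j k
    · obtain rfl : i = k := by_contra fun hik => h (isDiPath_two_iff.mpr ⟨hij, hjk, hik⟩)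
      simp [hψ0, extendEdge_of_not_adj _ (G.irrefl (v := i))]
    · simp [hψ0, hjk, extendEdge_of_not_adj _ hjk]

end

variable [Fintype V] [DecidableEq V]

theorem identity_F8_general (G : SimpleGraph V) [DecidableRel G.Adj]
    (lam : ℂ) (ψ : DiPath G 2 → ℂ) (hψ : (NBM G 2) *ᵥ ψ = lam • ψ) :
    lam ^ 3 • xvec G ψ =
      lam ^ 2 • ((Bmat G) *ᵥ xvec G ψ) - lam • ((dB2 G) *ᵥ xvec G ψ)
        + (Ddel G) *ᵥ xvec G ψ - yvec G ψ := by
  funext ⟨⟨i, j⟩, hij⟩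
  simp only [Pi.sub_apply, Pi.add_apply, Pi.smul_apply, smul_eq_mul]
  rw [xvec_apply ψ hij, yvec_apply ψ hij, bmat_mulVec_apply _ hij, dB2_mulVec_apply _ hij,
    ddel_mulVec_apply _ hij, mul_sum, mul_sum, mul_sum, ← sum_sub_distrib, ← sum_add_distrib,
    ← sum_sub_distrib]
  exact sum_congr rfl fun k _ => identity_F8_summand hψ hij k

/-- **Identity (F8).** The vectors `x` and `y` satisfy
`λ³x = λ²Bx − λ(ΔB₂)x + (D_Δ)x − y`. -/
theorem identity_F8 (G : SimpleGraph V) [DecidableRel G.Adj]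
    (lam : ℂ) (h0 : lam ≠ 0) (ψ : DiPath G 2 → ℂ) (hψ : (NBM G 2) *ᵥ ψ = lam • ψ) :
    lam ^ 3 • xvec G ψ =
      lam ^ 2 • ((Bmat G) *ᵥ xvec G ψ) - lam • ((dB2 G) *ᵥ xvec G ψ)
        + (Ddel G) *ᵥ xvec G ψ - yvec G ψ :=
  identity_F8_general G lam ψ hψ

end PercNB
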